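/- arXiv:1802.07849 — 4 statements merged into one kernel-verified Lean document; each statement's English description precedes it below -/
import Mathlib

section
/- The clone relation ~ on the attribute set M of a formal context is an equivalence relation: it is reflexive, symmetric, and transitive. -/
open Set

def extentOf {α β : Type*} (I : α → β → Prop) (B : Set β) : Set α :=
  {g | ∀ m ∈ B, I g m}

def intentOf {α β : Type*} (I : α → β → Prop) (A : Set α) : Set β :=
  {m | ∀ g ∈ A, I g m}

def IsIntent {α β : Type*} (I : α → β → Prop) (X : Set β) : Prop :=
  intentOf I (extentOf I X) = X

open scoped Classical in
noncomputable def phi {β : Type*} (a b : β) (X : Set β) : Set β :=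
  if a ∈ X ∧ b ∉ X then X \ {a} ∪ {b}
  else if b ∈ X ∧ a ∉ X then X \ {b} ∪ {a}
  else X

def Clone {α β : Type*} (I : α → β → Prop) (a b : β) : Prop :=
  ∀ X : Set β, IsIntent I X → IsIntent I (phi a b X)

def objDer {α β : Type*} (I : α → β → Prop) (g : α) : Set β := {m | I g m}

/-!
`φ_{a,b}(X)` is the preimage of `X` under the transposition `(a b)`, so `a ~ b` says that this
transposition maps intents to intents. Transitivity then comes from the conjugation identity
`(a c) = (a b) (b c) (a b)`, valid whenever `c ∉ {a, b}`.
-/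

section Clone

variable {α β : Type*}

open scoped Classical in
theorem phi_eq_preimage_swap (a b : β) (X : Set β) : phi a b X = Equiv.swap a b ⁻¹' X := by
  ext x
  rw [Set.mem_preimage, Equiv.swap_apply_def, phi]
  split_ifs <;> by_cases a = b <;> simp_all <;> tauto

theorem phi_self (a : β) (X : Set β) : phi a a X = X := by
  classical
  simp [phi_eq_preimage_swap]

theorem phi_comm (a b : β) : phi a b = phi b a := by
  classical
  ext1 X
  rw [phi_eq_preimage_swap, phi_eq_preimage_swap, Equiv.swap_comm]

open scoped Classical in
theorem clone_iff_swap_preimage (I : α → β → Prop) (a b : β) :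
    Clone I a b ↔ ∀ X, IsIntent I X → IsIntent I (Equiv.swap a b ⁻¹' X) := by
  simp only [Clone, phi_eq_preimage_swap]

theorem Clone.refl (I : α → β → Prop) (a : β) : Clone I a a := by
  intro X hX
  rwa [phi_self]

theorem Clone.symm {I : α → β → Prop} {a b : β} (h : Clone I a b) : Clone I b a := by
  rwa [Clone, phi_comm]

theorem Clone.trans {I : α → β → Prop} {a b c : β} (hab : Clone I a b) (hbc : Clone I b c) :
    Clone I a c := by
  classical
  rcases eq_or_ne c a with rfl | hca
  · exact Clone.refl I c
  rcases eq_or_ne c b with rfl | hcb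
  · exact hab
  have hconj : Equiv.swap a c = Equiv.swap a b * Equiv.swap b c * Equiv.swap a b := by
    simpa [Equiv.swap_apply_of_ne_of_ne hca hcb] using Equiv.swap_apply_apply (Equiv.swap a b) b c
  rw [clone_iff_swap_preimage] at hab hbc ⊢
  intro X hX
  simpa only [hconj, Equiv.Perm.coe_mul, Set.preimage_comp] using hab _ (hbc _ (hab _ hX))

end Clone

/-- The clone relation ~ on the attribute set of a formal context
is an equivalence relation. -/
theorem clone_equivalence {α β : Type*} (I : α → β → Prop) :
    Equivalence (Clone I) :=
  ⟨Clone.refl I, Clone.symm, Clone.trans⟩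
end

section
/- Clones are incomparable: if a ~ b in a formal context (G, M, I) and a' ⊆ b', then a' = b'. -/
open Set

lemma sub_intent_extent {α β : Type*} (I : α → β → Prop) (B : Set β) :
    B ⊆ intentOf I (extentOf I B) := fun m hm g hg => hg m hm

lemma intent_anti {α β : Type*} (I : α → β → Prop) {A A' : Set α} (h : A ⊆ A') :
    intentOf I A' ⊆ intentOf I A := fun m hm g hg => hm g (h hg)

lemma isIntent_intent {α β : Type*} (I : α → β → Prop) (A : Set α) :
    IsIntent I (intentOf I A) := by
  apply subset_antisymm
  · exact intent_anti I (fun g hg m hm => hm g hg)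
  · exact sub_intent_extent I _

/-- Clones are incomparable: if a ~ b and a' ⊆ b', then a' = b'. -/
theorem clones_incomparable {α β : Type*} (I : α → β → Prop) (a b : β)
    (hab : Clone I a b) (hsub : extentOf I {a} ⊆ extentOf I {b}) :
    extentOf I {a} = extentOf I {b} := by
  classical
  set B : Set β := intentOf I (extentOf I {b}) with hBdef
  have hbB : b ∈ B := sub_intent_extent I {b} rfl
  by_cases haB : a ∈ B
  · refine subset_antisymm hsub ?_
    intro g hg m hm
    rcases hm with rfl
    exact haB g hg
  · exfalso
    have hint : IsIntent I (phi a b B) := hab B (isIntent_intent I _)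
    have hphi : phi a b B = B \ {b} ∪ {a} := by
      unfold phi
      rw [if_neg (fun h => h.2 hbB), if_pos ⟨hbB, haB⟩]
    rw [hphi] at hint
    have haY : a ∈ B \ {b} ∪ {a} := Or.inr rfl
    have hextY : extentOf I (B \ {b} ∪ {a}) ⊆ extentOf I {a} := by
      intro g hg m hm
      rcases hm with rfl
      exact hg _ haY
    have hbY : b ∈ B \ {b} ∪ {a} := by
      rw [← hint]
      intro g hg
      exact hsub (hextY hg) b rfl
    rcases hbY with ⟨_, hne⟩ | heq
    · exact hne rfl
    · exact haB (heq ▸ hbB)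
end

section
/- In a clarified formal context, if two distinct attributes a and b satisfy a ~ b, then a is irreducible, i.e., there is no set N ⊆ M with a ∉ N and ⋂_{n ∈ N} n' = a'. -/
open Set

lemma ext_int_ext {α β : Type*} (I : α → β → Prop) (S : Set β) :
    extentOf I (intentOf I (extentOf I S)) = extentOf I S := by
  ext g
  constructor
  · intro hg m hm
    exact hg m (fun g' hg' => hg' m hm)
  · intro hg m hm
    exact hm g hg

lemma closure_isIntent {α β : Type*} (I : α → β → Prop) (S : Set β) :
    IsIntent I (intentOf I (extentOf I S)) := by
  unfold IsIntent
  rw [ext_int_ext]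

/-- In a clarified context, distinct clone attributes are irreducible. -/
theorem clone_irreducible {α β : Type*} (I : α → β → Prop)
    (hclar : ∀ m n : β, m ≠ n → extentOf I {m} ≠ extentOf I {n})
    (a b : β) (hne : a ≠ b) (hab : Clone I a b) :
    ¬ ∃ N : Set β, a ∉ N ∧ (⋂ n ∈ N, extentOf I {n}) = extentOf I {a} := by
  rintro ⟨N, haN, hN⟩
  -- X = {a}''
  set X : Set β := intentOf I (extentOf I {a}) with hXdef
  have hXint : IsIntent I X := closure_isIntent I {a}
  have haX : a ∈ X := fun g hg => hg a rfl
  by_cases hbX : b ∈ X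
  · -- then extent {a} ⊆ extent {b}; use Y = {b}''
    have hsub : extentOf I {a} ⊆ extentOf I {b} := by
      intro g hg m hm
      rw [hm]
      exact hbX g hg
    set Y : Set β := intentOf I (extentOf I {b}) with hYdef
    have hYint : IsIntent I Y := closure_isIntent I {b}
    have hbY : b ∈ Y := fun g hg => hg b rfl
    have haY : a ∉ Y := by
      intro haY
      apply hclar a b hne
      apply Set.Subset.antisymm hsub
      intro g hg m hm
      rw [hm]
      exact haY g hg
    have hphiY : phi a b Y = Y \ {b} ∪ {a} := by
      rw [phi, if_neg (fun h => haY h.1), if_pos ⟨hbY, haY⟩]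
    have hint : IsIntent I (phi a b Y) := hab Y hYint
    rw [hphiY] at hint
    -- b ∈ intentOf (extentOf (Y\{b} ∪ {a})) since extent ⊆ extent {a} ⊆ extent {b}
    have hb : b ∈ Y \ {b} ∪ {a} := by
      rw [← hint]
      intro g hg
      have hga : g ∈ extentOf I {a} := by
        intro m hm
        rw [hm]
        exact hg a (Or.inr rfl)
      exact hsub hga b rfl
    rcases hb with h | h
    · exact h.2 rfl
    · exact hne h.symm
  · -- b ∉ X
    have hphiX : phi a b X = X \ {a} ∪ {b} := by
      rw [phi, if_pos ⟨haX, hbX⟩]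
    have hint : IsIntent I (phi a b X) := hab X hXint
    rw [hphiX] at hint
    have hNX : N ⊆ X \ {a} := by
      intro n hn
      refine ⟨?_, fun h => haN (h ▸ hn)⟩
      intro g hg
      have : g ∈ extentOf I {n} := by
        have := hN ▸ (show g ∈ extentOf I {a} from fun m hm => hm ▸ hg a rfl)
        exact Set.mem_iInter₂.mp this n hn
      exact this n rfl
    have ha : a ∈ X \ {a} ∪ {b} := by
      rw [← hint]
      intro g hg
      have hgN : g ∈ ⋂ n ∈ N, extentOf I {n} := by
        refine Set.mem_iInter₂.mpr fun n hn => ?_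
        intro m hm
        rw [hm]
        exact hg n (Or.inl (hNX hn))
      have : g ∈ extentOf I {a} := hN ▸ hgN
      exact this a rfl
    rcases ha with h | h
    · exact h.2 rfl
    · exact hne h
end

section
/- The disjoint union of two formal contexts preserves clones: if a ~ b holds in K₁ = (G₁,M₁,I₁), then a ~ b holds in the context (G₁ ⊔ G₂, M₁ ⊔ M₂, I₁ ⊔ I₂) formed by disjoint union of object sets, attribute sets, and incidence relations. -/
open Set

/-- The incidence relation of the disjoint union of two formal contexts. -/
def unionIncidence {α₁ β₁ α₂ β₂ : Type*} (I₁ : α₁ → β₁ → Prop)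
    (I₂ : α₂ → β₂ → Prop) : (α₁ ⊕ α₂) → (β₁ ⊕ β₂) → Prop
  | Sum.inl g, Sum.inl m => I₁ g m
  | Sum.inr g, Sum.inr m => I₂ g m
  | _, _ => False

section Aux

variable {α β α₁ β₁ α₂ β₂ : Type*}

lemma intentOf_empty (I : α → β → Prop) : intentOf I (∅ : Set α) = univ := by
  ext m; simp [intentOf]

lemma extent_nonempty {I : α → β → Prop} {X : Set β} (hX : IsIntent I X)
    (hnu : X ≠ univ) : (extentOf I X).Nonempty := by
  rcases eq_empty_or_nonempty (extentOf I X) with h | h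
  · exact absurd (by rw [← hX, h, intentOf_empty]) hnu
  · exact h

lemma extent_union_eq (I₁ : α₁ → β₁ → Prop) (I₂ : α₂ → β₂ → Prop)
    {X : Set (β₁ ⊕ β₂)} (h₂ : ∀ m₂, Sum.inr m₂ ∉ X) (h₁ : ∃ m, Sum.inl m ∈ X) :
    extentOf (unionIncidence I₁ I₂) X = Sum.inl '' extentOf I₁ (Sum.inl ⁻¹' X) := by
  ext g
  cases g with
  | inl g =>
    simp only [extentOf, mem_setOf_eq, mem_image, Sum.inl.injEq, mem_preimage]
    constructor
    · intro h
      exact ⟨g, fun m hm => h _ hm, rfl⟩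
    · rintro ⟨g', hg', rfl⟩ m hm
      cases m with
      | inl m => exact hg' m hm
      | inr m => exact absurd hm (h₂ m)
  | inr g =>
    simp only [extentOf, mem_setOf_eq, mem_image]
    constructor
    · intro h
      obtain ⟨m, hm⟩ := h₁
      exact absurd (h _ hm) (by simp [unionIncidence])
    · rintro ⟨g', _, h⟩
      exact absurd h (by simp)

lemma intent_inl_image (I₁ : α₁ → β₁ → Prop) (I₂ : α₂ → β₂ → Prop)
    {A : Set α₁} (hA : A.Nonempty) :
    intentOf (unionIncidence I₁ I₂) (Sum.inl '' A) = Sum.inl '' intentOf I₁ A := by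
  ext m
  cases m with
  | inl m =>
    simp only [intentOf, mem_setOf_eq, mem_image, Sum.inl.injEq]
    constructor
    · intro h
      exact ⟨m, fun g hg => h _ ⟨g, hg, rfl⟩, rfl⟩
    · rintro ⟨m', hm', rfl⟩ g ⟨g', hg', rfl⟩
      exact hm' g' hg'
  | inr m =>
    simp only [intentOf, mem_setOf_eq, mem_image]
    constructor
    · intro h
      obtain ⟨g, hg⟩ := hA
      exact absurd (h _ ⟨g, hg, rfl⟩) (by simp [unionIncidence])
    · rintro ⟨m', _, h⟩
      exact absurd h (by simp)

lemma isIntent_inl_image (I₁ : α₁ → β₁ → Prop) (I₂ : α₂ → β₂ → Prop)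
    {Z : Set β₁} (hZ : IsIntent I₁ Z) (hne : Z.Nonempty) (hnu : Z ≠ univ) :
    IsIntent (unionIncidence I₁ I₂) (Sum.inl '' Z) := by
  have hE : (extentOf I₁ Z).Nonempty := extent_nonempty hZ hnu
  obtain ⟨z, hz⟩ := hne
  unfold IsIntent
  rw [extent_union_eq I₁ I₂ (by simp) ⟨z, mem_image_of_mem _ hz⟩,
    Set.preimage_image_eq Z Sum.inl_injective, intent_inl_image I₁ I₂ hE, hZ]

lemma no_inr_of_isIntent {I₁ : α₁ → β₁ → Prop} {I₂ : α₂ → β₂ → Prop}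
    {X : Set (β₁ ⊕ β₂)} (hX : IsIntent (unionIncidence I₁ I₂) X)
    (hnu : X ≠ univ) (h₁ : ∃ m, Sum.inl m ∈ X) : ∀ m₂, Sum.inr m₂ ∉ X := by
  intro m₂ hm₂
  obtain ⟨m, hm⟩ := h₁
  apply hnu
  have he : extentOf (unionIncidence I₁ I₂) X = ∅ := by
    ext g
    cases g with
    | inl g =>
      simp only [extentOf, mem_setOf_eq, mem_empty_iff_false, iff_false, not_forall]
      exact ⟨_, hm₂, fun h => h⟩
    | inr g =>
      simp only [extentOf, mem_setOf_eq, mem_empty_iff_false, iff_false, not_forall]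
      exact ⟨_, hm, fun h => h⟩
  rw [← hX, he, intentOf_empty]

lemma isIntent_restrict {I₁ : α₁ → β₁ → Prop} {I₂ : α₂ → β₂ → Prop}
    {X : Set (β₁ ⊕ β₂)} (hX : IsIntent (unionIncidence I₁ I₂) X)
    (hnu : X ≠ univ) (h₁ : ∃ m, Sum.inl m ∈ X) :
    IsIntent I₁ (Sum.inl ⁻¹' X) ∧ X = Sum.inl '' (Sum.inl ⁻¹' X) := by
  have h₂ := no_inr_of_isIntent hX hnu h₁
  have hXeq : X = Sum.inl '' (Sum.inl ⁻¹' X) := by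
    ext m
    cases m with
    | inl m => simp
    | inr m => simp [h₂ m]
  refine ⟨?_, hXeq⟩
  have hext : extentOf (unionIncidence I₁ I₂) X
      = Sum.inl '' extentOf I₁ (Sum.inl ⁻¹' X) := extent_union_eq I₁ I₂ h₂ h₁
  have hEne : (extentOf I₁ (Sum.inl ⁻¹' X)).Nonempty := by
    have := extent_nonempty hX hnu
    rw [hext] at this
    exact (Set.image_nonempty (f := Sum.inl)).mp this
  have : Sum.inl '' intentOf I₁ (extentOf I₁ (Sum.inl ⁻¹' X)) = X := by
    rw [← intent_inl_image I₁ I₂ hEne, ← hext]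
    exact hX
  unfold IsIntent
  have := congrArg (Sum.inl ⁻¹' ·) this
  simpa [Set.preimage_image_eq _ Sum.inl_injective] using this

end Aux

/-- Disjoint union of formal contexts preserves clones. -/
theorem union_preserves_clones {α₁ β₁ α₂ β₂ : Type*}
    (I₁ : α₁ → β₁ → Prop) (I₂ : α₂ → β₂ → Prop) (a b : β₁)
    (hab : Clone I₁ a b) :
    Clone (unionIncidence I₁ I₂) (Sum.inl a) (Sum.inl b) := by
  intro X hX
  by_cases hne : a = b
  · subst hne
    simpa [phi] using hX
  unfold phi
  split_ifs with h1 h2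
  · -- Sum.inl a ∈ X, Sum.inl b ∉ X
    obtain ⟨ha, hb⟩ := h1
    have hnu : X ≠ univ := fun h => hb (h ▸ mem_univ _)
    obtain ⟨hYint, hXeq⟩ := isIntent_restrict hX hnu ⟨a, ha⟩
    set Y₁ := Sum.inl ⁻¹' X with hY₁def
    have haY : a ∈ Y₁ := ha
    have hbY : b ∉ Y₁ := hb
    have hZint := hab Y₁ hYint
    rw [phi, if_pos ⟨haY, hbY⟩] at hZint
    have hZne : (Y₁ \ {a} ∪ {b}).Nonempty := ⟨b, Or.inr rfl⟩
    have hZnu : Y₁ \ {a} ∪ {b} ≠ univ := by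
      intro h
      have : a ∈ Y₁ \ {a} ∪ {b} := h ▸ mem_univ _
      rcases this with h' | h'
      · exact h'.2 rfl
      · exact hne h'
    have hT : X \ {Sum.inl a} ∪ {Sum.inl b} = Sum.inl '' (Y₁ \ {a} ∪ {b}) := by
      rw [image_union, image_diff Sum.inl_injective, image_singleton, image_singleton, ← hXeq]
    rw [hT]
    exact isIntent_inl_image I₁ I₂ hZint hZne hZnu
  · -- Sum.inl b ∈ X, Sum.inl a ∉ X
    obtain ⟨hb, ha⟩ := h2
    have hnu : X ≠ univ := fun h => ha (h ▸ mem_univ _)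
    obtain ⟨hYint, hXeq⟩ := isIntent_restrict hX hnu ⟨b, hb⟩
    set Y₁ := Sum.inl ⁻¹' X with hY₁def
    have hbY : b ∈ Y₁ := hb
    have haY : a ∉ Y₁ := ha
    have hZint := hab Y₁ hYint
    rw [phi, if_neg (fun h => haY h.1), if_pos ⟨hbY, haY⟩] at hZint
    have hZne : (Y₁ \ {b} ∪ {a}).Nonempty := ⟨a, Or.inr rfl⟩
    have hZnu : Y₁ \ {b} ∪ {a} ≠ univ := by
      intro h
      have : b ∈ Y₁ \ {b} ∪ {a} := h ▸ mem_univ _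
      rcases this with h' | h'
      · exact h'.2 rfl
      · exact hne h'.symm
    have hT : X \ {Sum.inl b} ∪ {Sum.inl a} = Sum.inl '' (Y₁ \ {b} ∪ {a}) := by
      rw [image_union, image_diff Sum.inl_injective, image_singleton, image_singleton, ← hXeq]
    rw [hT]
    exact isIntent_inl_image I₁ I₂ hZint hZne hZnu
  · exact hX
end
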